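/- Polynomial lower bound from the coercivity assumption (inequality (3.2) of Remark 3.3(i)): For every σ with 0 < σ < (K₃·R)⁻¹ there exists a constant C = C(σ) ∈ ℝ such that V(q) ≥ σ·|q|^R + C for all q ∈ ℝ. -/

import Mathlib

/-!
Polynomial lower bound from the coercivity assumption (inequality (3.2) of Remark 3.3(i)
of Albeverio–Kondratiev–Pasurek–Röckner, "Existence and A Priori Estimates for Euclidean
Gibbs States").

`V : ℝ → ℝ` is twice continuously differentiable, `R ≥ 2`, `K₃ > 0`, `L₃ ≥ 0`, and `V`
satisfies the coercivity condition (V_iii): `V′(q)·q ≥ K₃⁻¹·(|q|^R − L₃)` for all `q`.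
Then for every `σ` with `0 < σ < (K₃·R)⁻¹` there exists a constant `C = C(σ)` such that
`V(q) ≥ σ·|q|^R + C` for all `q ∈ ℝ`.
-/

/-- Auxiliary monotonicity lemma: on `[M, ∞)` with suitable `M`, the function
`q ↦ V q - σ * q ^ R` is monotone. -/
lemma aux_mono_coercivity
    (V : ℝ → ℝ) (hV : Differentiable ℝ V)
    (R K₃ L₃ σ : ℝ) (hR : 2 ≤ R) (hK₃ : 0 < K₃) (hL₃ : 0 ≤ L₃)
    (hσ : 0 < σ) (hε : 0 < K₃⁻¹ - σ * R)
    (hcoer : ∀ q : ℝ, K₃⁻¹ * (|q| ^ R - L₃) ≤ deriv V q * q)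
    (M : ℝ) (hM1 : 1 ≤ M) (hM2 : K₃⁻¹ * L₃ ≤ (K₃⁻¹ - σ * R) * M) :
    ∀ q : ℝ, M ≤ q → V M - σ * M ^ R ≤ V q - σ * q ^ R := by
  have hR0 : (0:ℝ) ≤ R := by linarith
  have hg : ∀ x : ℝ, 0 < x →
      HasDerivAt (fun q => V q - σ * q ^ R) (deriv V x - σ * (R * x ^ (R - 1))) x := by
    intro x hx
    exact ((hV x).hasDerivAt).sub
      ((Real.hasDerivAt_rpow_const (Or.inl (ne_of_gt hx))).const_mul σ)
  have hmono : MonotoneOn (fun q => V q - σ * q ^ R) (Set.Ici M) := by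
    apply monotoneOn_of_deriv_nonneg (convex_Ici M)
    · apply ContinuousOn.sub (hV.continuous.continuousOn)
      apply ContinuousOn.mul continuousOn_const
      intro x hx
      have hx0 : 0 < x := lt_of_lt_of_le (by linarith) hx
      exact (Real.continuousAt_rpow_const x R (Or.inl (ne_of_gt hx0))).continuousWithinAt
    · intro x hx
      rw [interior_Ici] at hx
      have hx0 : 0 < x := lt_of_lt_of_le (by linarith) (le_of_lt hx)
      exact ((hg x hx0).differentiableAt).differentiableWithinAt
    · intro x hx
      rw [interior_Ici] at hx
      have hxM : M ≤ x := le_of_lt hx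
      have hx0 : 0 < x := lt_of_lt_of_le (by linarith) hxM
      rw [(hg x hx0).deriv]
      -- key inequality
      have habs : |x| = x := abs_of_pos hx0
      have h1 : K₃⁻¹ * (x ^ R - L₃) ≤ deriv V x * x := by
        have := hcoer x; rwa [habs] at this
      have hxR : x ≤ x ^ R := by
        calc x = x ^ (1:ℝ) := (Real.rpow_one x).symm
        _ ≤ x ^ R := Real.rpow_le_rpow_of_exponent_le (le_trans hM1 hxM) (by linarith)
      have h2 : σ * (R * x ^ (R - 1)) * x ≤ K₃⁻¹ * (x ^ R - L₃) := by
        have hx1 : x ^ (R - 1) * x = x ^ R := by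
          rw [← Real.rpow_add_one (ne_of_gt hx0) (R - 1)]; ring_nf
        have hxM' : M ≤ x ^ R := le_trans (le_trans hxM hxR) le_rfl
        have : K₃⁻¹ * L₃ ≤ (K₃⁻¹ - σ * R) * x ^ R := by
          calc K₃⁻¹ * L₃ ≤ (K₃⁻¹ - σ * R) * M := hM2
          _ ≤ (K₃⁻¹ - σ * R) * x ^ R :=
            mul_le_mul_of_nonneg_left hxM' (le_of_lt hε)
        have heq : σ * (R * x ^ (R - 1)) * x = σ * R * x ^ R := by
          calc σ * (R * x ^ (R - 1)) * x = σ * R * (x ^ (R - 1) * x) := by ring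
          _ = σ * R * x ^ R := by rw [hx1]
        rw [heq]; linarith
      have hfinal : σ * (R * x ^ (R - 1)) * x ≤ deriv V x * x := le_trans h2 h1
      have := (mul_le_mul_iff_of_pos_right hx0).mp hfinal
      linarith
  intro q hq
  exact hmono (Set.self_mem_Ici) hq hq

theorem polynomial_lower_bound_from_coercivity
    (V : ℝ → ℝ) (hV : ContDiff ℝ 2 V)
    (R K₃ L₃ : ℝ) (hR : 2 ≤ R) (hK₃ : 0 < K₃) (hL₃ : 0 ≤ L₃)
    (hcoer : ∀ q : ℝ, K₃⁻¹ * (|q| ^ R - L₃) ≤ deriv V q * q) :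
    ∀ σ : ℝ, 0 < σ → σ < (K₃ * R)⁻¹ →
      ∃ C : ℝ, ∀ q : ℝ, σ * |q| ^ R + C ≤ V q := by
  intro σ hσ hσ'
  have hR0 : (0:ℝ) < R := by linarith
  have hVd : Differentiable ℝ V := hV.differentiable (by norm_num)
  have hε : 0 < K₃⁻¹ - σ * R := by
    have : σ * R < (K₃ * R)⁻¹ * R := by
      exact mul_lt_mul_of_pos_right hσ' hR0
    rw [mul_inv, mul_assoc, inv_mul_cancel₀ (ne_of_gt hR0), mul_one] at this
    linarith
  set M : ℝ := max 1 (K₃⁻¹ * L₃ / (K₃⁻¹ - σ * R)) with hMdef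
  have hM1 : 1 ≤ M := le_max_left _ _
  have hM0 : 0 < M := by linarith
  have hM2 : K₃⁻¹ * L₃ ≤ (K₃⁻¹ - σ * R) * M := by
    have h := le_max_right 1 (K₃⁻¹ * L₃ / (K₃⁻¹ - σ * R))
    calc K₃⁻¹ * L₃ = (K₃⁻¹ - σ * R) * (K₃⁻¹ * L₃ / (K₃⁻¹ - σ * R)) := by
          rw [mul_comm (K₃⁻¹ - σ * R), div_mul_cancel₀ _ (ne_of_gt hε)]
    _ ≤ (K₃⁻¹ - σ * R) * M := mul_le_mul_of_nonneg_left h (le_of_lt hε)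
  -- the reflected function
  set W : ℝ → ℝ := fun q => V (-q) with hWdef
  have hWd : Differentiable ℝ W := hVd.comp differentiable_neg
  have hWderiv : ∀ q : ℝ, deriv W q = deriv V (-q) * (-1) := by
    intro q
    exact (((hVd (-q)).hasDerivAt).comp q (hasDerivAt_neg q)).deriv
  have hWcoer : ∀ q : ℝ, K₃⁻¹ * (|q| ^ R - L₃) ≤ deriv W q * q := by
    intro q
    rw [hWderiv]
    have := hcoer (-q)
    rw [abs_neg] at this
    linarith [this]
  -- min on compact interval
  have hcont : Continuous (fun q : ℝ => V q - σ * |q| ^ R) := by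
    apply hVd.continuous.sub
    exact Continuous.mul continuous_const
      (continuous_abs.rpow_const (fun x => Or.inr (by linarith)))
  obtain ⟨q₀, hq₀mem, hq₀min⟩ :=
    isCompact_Icc.exists_isMinOn (α := ℝ) (s := Set.Icc (-M) M)
      (Set.nonempty_Icc.mpr (by linarith)) hcont.continuousOn
  refine ⟨V q₀ - σ * |q₀| ^ R, fun q => ?_⟩
  have hCmin : ∀ x ∈ Set.Icc (-M) M,
      V q₀ - σ * |q₀| ^ R ≤ V x - σ * |x| ^ R := fun x hx => hq₀min hx
  have hauxV := aux_mono_coercivity V hVd R K₃ L₃ σ hR hK₃ hL₃ hσ hε hcoer M hM1 hM2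
  have hauxW := aux_mono_coercivity W hWd R K₃ L₃ σ hR hK₃ hL₃ hσ hε hWcoer M hM1 hM2
  rcases le_or_gt (|q|) M with hle | hgt
  · have hq : q ∈ Set.Icc (-M) M := by
      constructor <;> [linarith [neg_abs_le q]; linarith [le_abs_self q]]
    linarith [hCmin q hq]
  · have hMC : V M - σ * M ^ R ≥ V q₀ - σ * |q₀| ^ R := by
      have := hCmin M ⟨by linarith, le_rfl⟩
      rwa [abs_of_pos hM0] at this
    have hMC' : V (-M) - σ * M ^ R ≥ V q₀ - σ * |q₀| ^ R := by
      have := hCmin (-M) ⟨le_rfl, by linarith⟩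
      rwa [abs_neg, abs_of_pos hM0] at this
    rcases le_or_gt 0 q with hq0 | hq0
    · have habs : |q| = q := abs_of_nonneg hq0
      have := hauxV q (by rw [← habs]; exact le_of_lt hgt)
      rw [habs]
      linarith
    · have habs : |q| = -q := abs_of_neg hq0
      have hMq : M ≤ -q := by rw [← habs]; exact le_of_lt hgt
      have := hauxW (-q) hMq
      simp only [hWdef, neg_neg] at this
      rw [habs]
      linarith
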